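/- Let B = σ(A)⟨x_1,…,x_n⟩ be a skew PBW extension of A with σ_i = id_A for all i; q_{ij} and a_{ij}^{(t)} lying in the center Z(A) with every q_{ij} invertible in A; δ_1 = 0; δ_t(q_{ij}) = δ_t(a_{ij}^{(m)}) = 0 for all m = 0,…,n and i,j,t = 1,…,n; and p_{1j} = 0 for all j (so x_j x_1 = q_{1j} x_1 x_j for all j > 1). Then S := {x_1^m : m ∈ ℕ} is a multiplicative set of B consisting of regular elements (s P = 0 implies P = 0 and P s = 0 implies P = 0 for s ∈ S, P ∈ B), and S satisfies both the left and the right Ore conditions: for every P ∈ B and every s = x_1^l ∈ S there exist Q, Q' ∈ B with P s = s Q and s P = Q' s. -/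

import Mathlib

/-!
Write `z = x_1 = S.x 0`. Since `σ_1 = id` and `δ_1 = 0`, `z` commutes with `A`, and `z x^α = x^(α + e_1)`;
as the monomials form a basis, left multiplication by `z` is injective. Moving `z` to the left across
a monomial `x^α` only produces a coefficient `c_α`, a product of powers of the `q_{1j}`: these are units
fixed by every `σ_i` and killed by every `δ_i`, so they commute with all `x_i`. Hence
`(∑ a_α x^α) z = z (∑ a_α c_α x^α)`, and since the `c_α` are units this gives `B z = z B` and right
regularity from left regularity. Powers of `z` follow by induction.
-/

/-- A skew PBW extension `B = σ(A)⟨x_1,…,x_n⟩` of a ring `A`. -/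
structure SkewPBW (A : Type*) (B : Type*) [Ring A] [Ring B] (n : ℕ) where
  ι : A →+* B
  hι : Function.Injective ι
  x : Fin n → B
  σ : Fin n → A →+* A
  hσ : ∀ i, Function.Injective (σ i)
  δ : Fin n → A → A
  δ_add : ∀ i a b, δ i (a + b) = δ i a + δ i b
  δ_mul : ∀ i a b, δ i (a * b) = σ i a * δ i b + δ i a * b
  x_comm : ∀ (i : Fin n) (a : A), x i * ι a = ι (σ i a) * x i + ι (δ i a)
  q : Fin n → Fin n → A
  q_leftinv : ∀ i j : Fin n, i < j → ∃ u : A, u * q i j = 1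
  a0 : Fin n → Fin n → A
  ac : Fin n → Fin n → Fin n → A
  rel : ∀ i j : Fin n, i < j →
    x j * x i = ι (q i j) * (x i * x j) + ι (a0 i j) + ∑ t : Fin n, ι (ac i j t) * x t
  free : ∀ f : B, ∃! c : (Fin n → ℕ) →₀ A,
    f = c.sum fun v a => ι a * ((List.finRange n).map fun i => x i ^ v i).prod

section SkewCommutant

variable {M : Type*} [Monoid M]

def skewCommutant (C : Submonoid M) (z : M) : Submonoid M where
  carrier := {y | (∀ c ∈ C, Commute y c) ∧ ∃ c ∈ C, y * z = c * (z * y)}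
  one_mem' := ⟨fun c _ => Commute.one_left c, 1, C.one_mem, by simp⟩
  mul_mem' := by
    rintro y₁ y₂ ⟨hy₁, c₁, hc₁, h₁⟩ ⟨hy₂, c₂, hc₂, h₂⟩
    refine ⟨fun c hc => (hy₁ c hc).mul_left (hy₂ c hc), c₂ * c₁, C.mul_mem hc₂ hc₁, ?_⟩
    calc y₁ * y₂ * z = y₁ * c₂ * (z * y₂) := by rw [mul_assoc, h₂, mul_assoc]
      _ = c₂ * (y₁ * z) * y₂ := by rw [(hy₁ c₂ hc₂).eq]; simp only [mul_assoc]
      _ = c₂ * c₁ * (z * (y₁ * y₂)) := by rw [h₁]; simp only [mul_assoc]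

theorem exists_mul_pow_eq_pow_mul {z : M} (h : ∀ p, ∃ q, p * z = z * q) (p : M) (l : ℕ) :
    ∃ q, p * z ^ l = z ^ l * q := by
  induction l with
  | zero => exact ⟨p, by simp⟩
  | succ l ih =>
    obtain ⟨q, hq⟩ := ih
    obtain ⟨q', hq'⟩ := h q
    exact ⟨q', by rw [pow_succ, ← mul_assoc, hq, mul_assoc, hq', ← mul_assoc]⟩

theorem exists_pow_mul_eq_mul_pow {z : M} (h : ∀ p, ∃ q, z * p = q * z) (p : M) (l : ℕ) :
    ∃ q, z ^ l * p = q * z ^ l := by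
  induction l with
  | zero => exact ⟨p, by simp⟩
  | succ l ih =>
    obtain ⟨q, hq⟩ := ih
    obtain ⟨q', hq'⟩ := h q
    exact ⟨q', by rw [pow_succ', mul_assoc, hq, ← mul_assoc, hq', mul_assoc]⟩

end SkewCommutant

namespace SkewPBW

variable {A B : Type*} [Ring A] [Ring B] {n : ℕ}

def monomial (S : SkewPBW A B n) (v : Fin n → ℕ) : B :=
  ((List.finRange n).map fun i => S.x i ^ v i).prod

theorem monomial_mem (S : SkewPBW A B n) {T : Submonoid B} (hx : ∀ i, S.x i ∈ T)
    (v : Fin n → ℕ) : S.monomial v ∈ T :=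
  T.list_prod_mem <| by
    simp only [List.mem_map, List.mem_finRange, true_and, forall_exists_index]
    rintro _ i rfl
    exact T.pow_mem (hx i) _

theorem exists_eq_sum_monomial (S : SkewPBW A B n) (P : B) :
    ∃ (s : Finset (Fin n → ℕ)) (a : (Fin n → ℕ) → A),
      P = ∑ v ∈ s, S.ι (a v) * S.monomial v := by
  obtain ⟨c, hc, -⟩ := S.free P
  exact ⟨c.support, c, hc⟩

theorem eq_zero_of_sum_monomial_eq_zero (S : SkewPBW A B n) (e : (Fin n → ℕ) ↪ (Fin n → ℕ))
    {s : Finset (Fin n → ℕ)} {a : (Fin n → ℕ) → A}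
    (h : ∑ v ∈ s, S.ι (a v) * S.monomial (e v) = 0) : ∀ v ∈ s, a v = 0 := by
  classical
  set c := Finsupp.onFinset s (fun v => if v ∈ s then a v else 0) fun v hv => by
    by_contra hvs
    exact hv (if_neg hvs)
  have hsum : (c.embDomain e).sum (fun v a => S.ι a * S.monomial v) = 0 := by
    rw [Finsupp.sum_embDomain, Finsupp.onFinset_sum _ fun v => by rw [map_zero, zero_mul], ← h]
    exact Finset.sum_congr rfl fun v hv => by rw [if_pos hv]
  have hc : c = 0 :=
    Finsupp.embDomain_eq_zero.1 <| (S.free 0).unique hsum.symm Finsupp.sum_zero_index.symm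
  intro v hv
  simpa [c, hv] using DFunLike.congr_fun hc v

theorem δ_one (S : SkewPBW A B n) (t : Fin n) : S.δ t 1 = 0 := by
  simpa using S.δ_mul t 1 1

def constants (S : SkewPBW A B n) : Submonoid A where
  carrier := {a | ∀ t, S.δ t a = 0}
  one_mem' := S.δ_one
  mul_mem' ha hb t := by rw [S.δ_mul, ha t, hb t, mul_zero, zero_mul, add_zero]

theorem commute_x_ι (S : SkewPBW A B n) {i : Fin n} {a : A} (hσ : S.σ i a = a)
    (hδ : S.δ i a = 0) : Commute (S.x i) (S.ι a) := by
  rw [Commute, SemiconjBy, S.x_comm, hσ, hδ, map_zero, add_zero]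

theorem x_mem_skewCommutant {m : ℕ} (S : SkewPBW A B (m + 1))
    (hσ : ∀ (i : Fin (m + 1)) (a : A), S.σ i a = a)
    (hqu : ∀ j : Fin (m + 1), 0 < j → IsUnit (S.q 0 j))
    (hδq : ∀ t j : Fin (m + 1), S.δ t (S.q 0 j) = 0)
    (ha0 : ∀ j : Fin (m + 1), S.a0 0 j = 0) (hac : ∀ j t : Fin (m + 1), S.ac 0 j t = 0)
    (i : Fin (m + 1)) :
    S.x i ∈ skewCommutant ((S.constants ⊓ IsUnit.submonoid A).map S.ι) (S.x 0) := by
  refine ⟨?_, ?_⟩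
  · rintro _ ⟨c, ⟨hc, -⟩, rfl⟩
    exact S.commute_x_ι (hσ i c) (hc i)
  · rcases eq_or_ne i 0 with rfl | hi
    · exact ⟨1, one_mem _, by rw [one_mul]⟩
    · have hi : 0 < i := Fin.pos_of_ne_zero hi
      refine ⟨S.ι (S.q 0 i), ⟨_, ⟨fun t => hδq t i, hqu i hi⟩, rfl⟩, ?_⟩
      simpa [ha0, hac] using S.rel 0 i hi

theorem exists_unit_monomial_mul_x_zero {m : ℕ} (S : SkewPBW A B (m + 1))
    (hσ : ∀ (i : Fin (m + 1)) (a : A), S.σ i a = a)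
    (hqu : ∀ j : Fin (m + 1), 0 < j → IsUnit (S.q 0 j))
    (hδq : ∀ t j : Fin (m + 1), S.δ t (S.q 0 j) = 0)
    (ha0 : ∀ j : Fin (m + 1), S.a0 0 j = 0) (hac : ∀ j t : Fin (m + 1), S.ac 0 j t = 0)
    (v : Fin (m + 1) → ℕ) :
    ∃ c : Aˣ, S.monomial v * S.x 0 = S.ι c * (S.x 0 * S.monomial v) := by
  obtain ⟨-, _, ⟨c, ⟨-, hc⟩, rfl⟩, h⟩ :=
    S.monomial_mem (S.x_mem_skewCommutant hσ hqu hδq ha0 hac) v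
  exact ⟨hc.unit, h⟩

section MulXZero

variable {m : ℕ} (S : SkewPBW A B (m + 1))

theorem x_zero_mul_monomial (v : Fin (m + 1) → ℕ) :
    S.x 0 * S.monomial v = S.monomial (v + Pi.single 0 1) := by
  simp [monomial, List.finRange_succ, Function.comp_def, Fin.succ_ne_zero, pow_succ', mul_assoc]

theorem x_zero_mul_eq_zero (hx0 : ∀ a, Commute (S.x 0) (S.ι a)) {P : B} (h : S.x 0 * P = 0) :
    P = 0 := by
  obtain ⟨s, a, rfl⟩ := S.exists_eq_sum_monomial P
  have hshift : ∑ v ∈ s, S.ι (a v) * S.monomial (addRightEmbedding (Pi.single 0 1) v) = 0 := by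
    rw [← h, Finset.mul_sum]
    refine Finset.sum_congr rfl fun v _ => ?_
    rw [← mul_assoc, (hx0 _).eq, mul_assoc, x_zero_mul_monomial]
    rfl
  have ha := S.eq_zero_of_sum_monomial_eq_zero _ hshift
  exact Finset.sum_eq_zero fun v hv => by rw [ha v hv, map_zero, zero_mul]

variable {S}

theorem sum_monomial_mul_x_zero {c : (Fin (m + 1) → ℕ) → Aˣ} (hx0 : ∀ a, Commute (S.x 0) (S.ι a))
    (hc : ∀ v, S.monomial v * S.x 0 = S.ι (c v) * (S.x 0 * S.monomial v))
    (s : Finset (Fin (m + 1) → ℕ)) (a : (Fin (m + 1) → ℕ) → A) :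
    (∑ v ∈ s, S.ι (a v) * S.monomial v) * S.x 0
      = S.x 0 * ∑ v ∈ s, S.ι (a v * c v) * S.monomial v := by
  rw [Finset.sum_mul, Finset.mul_sum]
  refine Finset.sum_congr rfl fun v _ => ?_
  rw [mul_assoc, hc, ← mul_assoc, ← map_mul, ← mul_assoc, ← (hx0 _).eq, mul_assoc]

theorem mul_x_zero_eq_zero {c : (Fin (m + 1) → ℕ) → Aˣ} (hx0 : ∀ a, Commute (S.x 0) (S.ι a))
    (hc : ∀ v, S.monomial v * S.x 0 = S.ι (c v) * (S.x 0 * S.monomial v)) {P : B}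
    (h : P * S.x 0 = 0) : P = 0 := by
  obtain ⟨s, a, rfl⟩ := S.exists_eq_sum_monomial P
  rw [sum_monomial_mul_x_zero hx0 hc] at h
  have hac := S.eq_zero_of_sum_monomial_eq_zero (Function.Embedding.refl _)
    (S.x_zero_mul_eq_zero hx0 h)
  exact Finset.sum_eq_zero fun v hv => by
    rw [(Units.mul_left_eq_zero _).1 (hac v hv), map_zero, zero_mul]

theorem exists_mul_x_zero_eq {c : (Fin (m + 1) → ℕ) → Aˣ} (hx0 : ∀ a, Commute (S.x 0) (S.ι a))
    (hc : ∀ v, S.monomial v * S.x 0 = S.ι (c v) * (S.x 0 * S.monomial v)) (P : B) :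
    ∃ Q, P * S.x 0 = S.x 0 * Q := by
  obtain ⟨s, a, rfl⟩ := S.exists_eq_sum_monomial P
  exact ⟨_, sum_monomial_mul_x_zero hx0 hc s a⟩

theorem exists_x_zero_mul_eq {c : (Fin (m + 1) → ℕ) → Aˣ} (hx0 : ∀ a, Commute (S.x 0) (S.ι a))
    (hc : ∀ v, S.monomial v * S.x 0 = S.ι (c v) * (S.x 0 * S.monomial v)) (P : B) :
    ∃ Q, S.x 0 * P = Q * S.x 0 := by
  obtain ⟨s, a, rfl⟩ := S.exists_eq_sum_monomial P
  refine ⟨∑ v ∈ s, S.ι (a v * ↑(c v)⁻¹) * S.monomial v, ?_⟩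
  simp only [sum_monomial_mul_x_zero hx0 hc, Units.inv_mul_cancel_right]

end MulXZero

end SkewPBW

theorem stmt_13_general {A B : Type*} [Ring A] [Ring B] {n : ℕ} (hn : 0 < n)
    (S : SkewPBW A B n)
    (hσ : ∀ (i : Fin n) (a : A), S.σ i a = a)
    (hqu : ∀ i j : Fin n, i < j → IsUnit (S.q i j))
    (hδ1 : ∀ a : A, S.δ ⟨0, hn⟩ a = 0)
    (hδq : ∀ t i j : Fin n, S.δ t (S.q i j) = 0)
    (hp1a0 : ∀ j : Fin n, S.a0 ⟨0, hn⟩ j = 0)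
    (hp1ac : ∀ j t : Fin n, S.ac ⟨0, hn⟩ j t = 0) :
    (∀ s ∈ Submonoid.powers (S.x ⟨0, hn⟩), ∀ P : B, s * P = 0 → P = 0) ∧
    (∀ s ∈ Submonoid.powers (S.x ⟨0, hn⟩), ∀ P : B, P * s = 0 → P = 0) ∧
    (∀ (P : B) (l : ℕ), ∃ Q : B, P * S.x ⟨0, hn⟩ ^ l = S.x ⟨0, hn⟩ ^ l * Q) ∧
    (∀ (P : B) (l : ℕ), ∃ Q' : B, S.x ⟨0, hn⟩ ^ l * P = Q' * S.x ⟨0, hn⟩ ^ l) := by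
  obtain ⟨m, rfl⟩ := Nat.exists_eq_succ_of_ne_zero hn.ne'
  have h0 : (⟨0, hn⟩ : Fin (m + 1)) = 0 := rfl
  rw [h0] at hδ1 hp1a0 hp1ac ⊢
  have hx0 : ∀ a, Commute (S.x 0) (S.ι a) := fun a => S.commute_x_ι (hσ 0 a) (hδ1 a)
  choose c hc using S.exists_unit_monomial_mul_x_zero hσ (hqu 0) (fun t => hδq t 0) hp1a0 hp1ac
  have hleft : IsLeftRegular (S.x 0) :=
    isLeftRegular_iff_right_eq_zero_of_mul.2 fun _ => S.x_zero_mul_eq_zero hx0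
  have hright : IsRightRegular (S.x 0) :=
    isRightRegular_iff_left_eq_zero_of_mul.2 fun _ => SkewPBW.mul_x_zero_eq_zero hx0 hc
  refine ⟨?_, ?_, exists_mul_pow_eq_pow_mul (SkewPBW.exists_mul_x_zero_eq hx0 hc),
    exists_pow_mul_eq_mul_pow (SkewPBW.exists_x_zero_mul_eq hx0 hc)⟩
  · rintro _ ⟨k, rfl⟩ P hP
    exact hleft.pow k (hP.trans (mul_zero _).symm)
  · rintro _ ⟨k, rfl⟩ P hP
    exact hright.pow k (hP.trans (zero_mul _).symm)

/-- `S = {x_1^m}` consists of regular elements and satisfies the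
left and right Ore conditions. -/
theorem stmt_13 {A B : Type*} [Ring A] [Ring B] {n : ℕ} (hn : 0 < n)
    (S : SkewPBW A B n)
    (hσ : ∀ (i : Fin n) (a : A), S.σ i a = a)
    (hqc : ∀ (i j : Fin n) (b : A), S.q i j * b = b * S.q i j)
    (hacc : ∀ (i j t : Fin n) (b : A), S.ac i j t * b = b * S.ac i j t)
    (ha0c : ∀ (i j : Fin n) (b : A), S.a0 i j * b = b * S.a0 i j)
    (hqu : ∀ i j : Fin n, i < j → IsUnit (S.q i j))
    (hδ1 : ∀ a : A, S.δ ⟨0, hn⟩ a = 0)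
    (hδq : ∀ t i j : Fin n, S.δ t (S.q i j) = 0)
    (hδa0 : ∀ t i j : Fin n, S.δ t (S.a0 i j) = 0)
    (hδac : ∀ t i j m : Fin n, S.δ t (S.ac i j m) = 0)
    (hp1a0 : ∀ j : Fin n, S.a0 ⟨0, hn⟩ j = 0)
    (hp1ac : ∀ j t : Fin n, S.ac ⟨0, hn⟩ j t = 0) :
    (∀ s ∈ Submonoid.powers (S.x ⟨0, hn⟩), ∀ P : B, s * P = 0 → P = 0) ∧
    (∀ s ∈ Submonoid.powers (S.x ⟨0, hn⟩), ∀ P : B, P * s = 0 → P = 0) ∧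
    (∀ (P : B) (l : ℕ), ∃ Q : B, P * S.x ⟨0, hn⟩ ^ l = S.x ⟨0, hn⟩ ^ l * Q) ∧
    (∀ (P : B) (l : ℕ), ∃ Q' : B, S.x ⟨0, hn⟩ ^ l * P = Q' * S.x ⟨0, hn⟩ ^ l) :=
  stmt_13_general hn S hσ hqu hδ1 hδq hp1a0 hp1ac
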